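/- arXiv:2504.03466 — 3 statements merged into one kernel-verified Lean document; each statement's English description precedes it below -/
import Mathlib

section
/- Let G be a finite directed graph with self-loops at every node, Λ a weighted adjacency matrix supported on the edges of G with ρ(Λ) < 1, λ_{ii} ≠ 0 for all i, and suppose all entries of Λ on edges of G are positive. Let Σ = ω ∑_{k≥0} (Λᵀ)^k Λ^k for some ω > 0. Then σ_{ij} = 0 if and only if i and j do not belong to a common maximal class of G. -/
open Matrix

/-- The spectral radius of a real square matrix: the supremum of the absolute
values of its complex eigenvalues. -/
noncomputable def specRad {m : Type*} [Fintype m] [DecidableEq m]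
    (A : Matrix m m ℝ) : ℝ :=
  sSup ((fun z : ℂ => ‖z‖) '' spectrum ℂ (A.map Complex.ofReal))

/-- A node `s` is a *source node* of the directed graph `E` if the strongly
connected component of `s` has no incoming edge from outside, i.e. every node
that reaches `s` is reached back from `s`. -/
def IsSourceNode {V : Type*} (E : V → V → Prop) (s : V) : Prop :=
  ∀ v, Relation.ReflTransGen E v s → Relation.ReflTransGen E s v

/-- `i` and `j` belong to a common maximal class: there is a source node `s`
with directed paths to both `i` and `j`. -/
def CommonMaxClass {V : Type*} (E : V → V → Prop) (i j : V) : Prop :=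
  ∃ s, IsSourceNode E s ∧ Relation.ReflTransGen E s i ∧ Relation.ReflTransGen E s j

/-- The set of maximal classes of a directed graph: sets of all nodes reachable
from some source node. -/
def maximalClassesOf {V : Type*} (E : V → V → Prop) : Set (Set V) :=
  { S | ∃ s, IsSourceNode E s ∧ S = {v | Relation.ReflTransGen E s v} }

section Aux

variable {n : ℕ} {E : Fin n → Fin n → Prop} {L : Matrix (Fin n) (Fin n) ℝ}

/-- Every node is reachable from some source node. -/
lemma exists_source (E : Fin n → Fin n → Prop) (l : Fin n) :
    ∃ s, IsSourceNode E s ∧ Relation.ReflTransGen E s l := by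
  suffices h : ∀ m : ℕ, ∀ l : Fin n, {v | Relation.ReflTransGen E v l}.ncard < m →
      ∃ s, IsSourceNode E s ∧ Relation.ReflTransGen E s l from
    h ({v | Relation.ReflTransGen E v l}.ncard + 1) l (Nat.lt_succ_self _)
  intro m
  induction m with
  | zero => intro l h; omega
  | succ m ih =>
    intro l h
    by_cases hl : IsSourceNode E l
    · exact ⟨l, hl, Relation.ReflTransGen.refl⟩
    · rw [IsSourceNode] at hl
      push_neg at hl
      obtain ⟨v, hvl, hlv⟩ := hl
      have hsubset : {u | Relation.ReflTransGen E u v} ⊆ {u | Relation.ReflTransGen E u l} :=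
        fun u hu => hu.trans hvl
      have hss : {u | Relation.ReflTransGen E u v} ⊂ {u | Relation.ReflTransGen E u l} :=
        (Set.ssubset_iff_of_subset hsubset).mpr ⟨l, Relation.ReflTransGen.refl, hlv⟩
      have hcard := Set.ncard_lt_ncard hss (Set.toFinite _)
      obtain ⟨s, hs, hsv⟩ := ih v (by omega)
      exact ⟨s, hs, hsv.trans hvl⟩

lemma commonMaxClass_iff (E : Fin n → Fin n → Prop) (i j : Fin n) :
    CommonMaxClass E i j ↔ ∃ l, Relation.ReflTransGen E l i ∧ Relation.ReflTransGen E l j := by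
  constructor
  · rintro ⟨s, _, h1, h2⟩; exact ⟨s, h1, h2⟩
  · rintro ⟨l, h1, h2⟩
    obtain ⟨s, hs, hsl⟩ := exists_source E l
    exact ⟨s, hs, hsl.trans h1, hsl.trans h2⟩

lemma entries_nonneg (hpos : ∀ i j, E i j → 0 < L i j)
    (hzero : ∀ i j, ¬ E i j → L i j = 0) (i j : Fin n) : 0 ≤ L i j := by
  by_cases h : E i j
  · exact (hpos i j h).le
  · exact (hzero i j h).ge

lemma pow_entries_nonneg (hnn : ∀ i j, 0 ≤ L i j) (k : ℕ) (i j : Fin n) :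
    0 ≤ (L ^ k) i j := by
  induction k generalizing i j with
  | zero =>
    simp only [pow_zero, Matrix.one_apply]
    split <;> norm_num
  | succ k ih =>
    rw [pow_succ, Matrix.mul_apply]
    exact Finset.sum_nonneg fun m _ => mul_nonneg (ih i m) (hnn m j)

lemma pos_imp_reach (hnn : ∀ i j, 0 ≤ L i j)
    (hzero : ∀ i j, ¬ E i j → L i j = 0) :
    ∀ (k : ℕ) (l i : Fin n), 0 < (L ^ k) l i → Relation.ReflTransGen E l i := by
  intro k
  induction k with
  | zero =>
    intro l i h
    rw [pow_zero, Matrix.one_apply] at h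
    split at h
    · subst ‹l = i›; exact Relation.ReflTransGen.refl
    · exact absurd h (lt_irrefl 0)
  | succ k ih =>
    intro l i h
    rw [pow_succ', Matrix.mul_apply] at h
    have : ∃ m ∈ Finset.univ, (0 : ℝ) < L l m * (L ^ k) m i := by
      apply Finset.exists_lt_of_sum_lt (f := fun _ => (0 : ℝ))
      simpa using h
    obtain ⟨m, _, hm⟩ := this
    have h1 : 0 < L l m := by
      rcases (hnn l m).lt_or_eq with h' | h'
      · exact h'
      · rw [← h'] at hm; simp at hm
    have h2 : 0 < (L ^ k) m i := by
      rcases (pow_entries_nonneg hnn k m i).lt_or_eq with h' | h'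
      · exact h'
      · rw [← h'] at hm; simp at hm
    have hE : E l m := by
      by_contra hne
      rw [hzero l m hne] at h1
      exact lt_irrefl 0 h1
    exact Relation.ReflTransGen.head hE (ih m i h2)

lemma reach_imp_pos (hnn : ∀ i j, 0 ≤ L i j) (hpos : ∀ i j, E i j → 0 < L i j)
    {l i : Fin n} (h : Relation.ReflTransGen E l i) : ∃ k, 0 < (L ^ k) l i := by
  induction h with
  | refl => exact ⟨0, by simp⟩
  | @tail b c hab hbc ih =>
    obtain ⟨k, hk⟩ := ih
    refine ⟨k + 1, ?_⟩
    rw [pow_succ, Matrix.mul_apply]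
    refine Finset.sum_pos' (fun m _ => mul_nonneg (pow_entries_nonneg hnn k l m) (hnn m c)) ?_
    exact ⟨b, Finset.mem_univ b, mul_pos hk (hpos b c hbc)⟩

lemma pos_mono (hnn : ∀ i j, 0 ≤ L i j) (hpos : ∀ i j, E i j → 0 < L i j)
    (hloop : ∀ i, E i i) {k k' : ℕ} (hkk : k ≤ k') {l i : Fin n}
    (h : 0 < (L ^ k) l i) : 0 < (L ^ k') l i := by
  induction k', hkk using Nat.le_induction with
  | base => exact h
  | succ k' _ ih =>
    rw [pow_succ', Matrix.mul_apply]
    refine Finset.sum_pos' (fun m _ => mul_nonneg (hnn l m) (pow_entries_nonneg hnn k' m i)) ?_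
    exact ⟨l, Finset.mem_univ l, mul_pos (hpos l l (hloop l)) ih⟩

lemma map_pow_ofReal (L : Matrix (Fin n) (Fin n) ℝ) (k : ℕ) :
    (L.map Complex.ofReal) ^ k = (L ^ k).map Complex.ofReal := by
  induction k with
  | zero =>
    simp only [pow_zero]
    exact (Matrix.map_one _ (by simp) (by simp)).symm
  | succ k ih =>
    rw [pow_succ, pow_succ, ih]
    ext a b
    simp only [Matrix.map_apply, Matrix.mul_apply]
    push_cast
    rfl

/-- Geometric entrywise bound on powers of a matrix with spectral radius `< 1`. -/
lemma pow_entry_bound (L : Matrix (Fin n) (Fin n) ℝ) [Nonempty (Fin n)]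
    (hρ : specRad L < 1) :
    ∃ C r : ℝ, 0 < r ∧ r < 1 ∧ 0 ≤ C ∧ ∀ (k : ℕ) (i j : Fin n), |(L ^ k) i j| ≤ C * r ^ k := by
  classical
  letI : NormedRing (Matrix (Fin n) (Fin n) ℂ) := Matrix.linftyOpNormedRing
  letI : NormedAlgebra ℂ (Matrix (Fin n) (Fin n) ℂ) := Matrix.linftyOpNormedAlgebra
  letI : CompleteSpace (Matrix (Fin n) (Fin n) ℂ) := FiniteDimensional.complete ℂ _
  set A := L.map Complex.ofReal with hA
  -- the entry bound via the operator norm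
  have hentry : ∀ (M : Matrix (Fin n) (Fin n) ℂ) (i j : Fin n), ‖M i j‖ ≤ ‖M‖ := by
    intro M i j
    have h1 : ‖M i j‖₊ ≤ ∑ j' : Fin n, ‖M i j'‖₊ :=
      Finset.single_le_sum (f := fun j' => ‖M i j'‖₊) (fun _ _ => zero_le) (Finset.mem_univ j)
    have h2 : (∑ j' : Fin n, ‖M i j'‖₊) ≤ ‖M‖₊ := by
      rw [Matrix.linfty_opNNNorm_def]
      exact Finset.le_sup (f := fun i' => ∑ j' : Fin n, ‖M i' j'‖₊) (Finset.mem_univ i)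
    exact_mod_cast h1.trans h2
  -- spectral radius bound
  have hBdd : BddAbove ((fun z : ℂ => ‖z‖) '' spectrum ℂ A) := by
    refine ⟨‖A‖, ?_⟩
    rintro y ⟨z, hz, rfl⟩
    exact spectrum.norm_le_norm_of_mem hz
  have hspec : spectralRadius ℂ A < 1 := by
    set m := max 0 (specRad L) with hm
    have hm1 : m < 1 := max_lt one_pos hρ
    have hle : spectralRadius ℂ A ≤ ENNReal.ofReal m := by
      refine iSup₂_le fun z hz => ?_
      have h1 : ‖z‖ ≤ specRad L := le_csSup hBdd ⟨z, hz, rfl⟩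
      have h2 : ‖z‖ ≤ m := h1.trans (le_max_right _ _)
      calc (‖z‖₊ : ENNReal) = ENNReal.ofReal ‖z‖ := by
            exact (ofReal_norm z).symm
        _ ≤ ENNReal.ofReal m := ENNReal.ofReal_le_ofReal h2
    exact hle.trans_lt (ENNReal.ofReal_lt_one.mpr hm1)
  have hne : spectralRadius ℂ A ≠ ⊤ := hspec.trans_le le_top |>.ne
  set ρt := (spectralRadius ℂ A).toReal with hρt
  have hρt0 : 0 ≤ ρt := ENNReal.toReal_nonneg
  have hρt1 : ρt < 1 := by
    have := (ENNReal.toReal_lt_toReal hne (by norm_num : (1 : ENNReal) ≠ ⊤)).mpr hspec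
    simpa using this
  set r := max (1/2 : ℝ) ((ρt + 1) / 2) with hr
  have hr0 : 0 < r := lt_of_lt_of_le (by norm_num) (le_max_left _ _)
  have hr1 : r < 1 := max_lt (by norm_num) (by linarith)
  have hρtr : ρt < r := lt_of_lt_of_le (by linarith) (le_max_right _ _)
  have hspr : spectralRadius ℂ A < ENNReal.ofReal r := by
    rw [← ENNReal.ofReal_toReal hne]
    exact (ENNReal.ofReal_lt_ofReal_iff hr0).mpr hρtr
  -- Gelfand's formula
  have hT := spectrum.pow_nnnorm_pow_one_div_tendsto_nhds_spectralRadius A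
  have hev := hT.eventually_lt_const hspr
  obtain ⟨N, hN⟩ := Filter.eventually_atTop.mp hev
  -- power norm bound for large k
  have hbig : ∀ k : ℕ, N ≤ k → 1 ≤ k → ‖A ^ k‖ ≤ r ^ k := by
    intro k hk hk1
    have h1 := hN k hk
    have hk0 : (k : ℝ) ≠ 0 := by positivity
    have h2 : ((‖A ^ k‖₊ : ENNReal) ^ (1 / (k : ℝ))) ^ (k : ℝ) ≤
        (ENNReal.ofReal r) ^ (k : ℝ) := ENNReal.rpow_le_rpow h1.le (by positivity)
    rw [← ENNReal.rpow_mul, one_div, inv_mul_cancel₀ hk0, ENNReal.rpow_one] at h2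
    rw [ENNReal.ofReal_rpow_of_pos hr0] at h2
    rw [← enorm_eq_nnnorm, ← ofReal_norm] at h2
    have := (ENNReal.ofReal_le_ofReal_iff (by positivity)).mp h2
    rwa [Real.rpow_natCast] at this
  -- constant for small k
  set M := max N 1 with hM
  set C := 1 + ∑ k ∈ Finset.range M, ‖A ^ k‖ / r ^ k with hC
  have hC1 : (1 : ℝ) ≤ C := by
    have : 0 ≤ ∑ k ∈ Finset.range M, ‖A ^ k‖ / r ^ k :=
      Finset.sum_nonneg fun k _ => div_nonneg (norm_nonneg _) (by positivity)
    rw [hC]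
    linarith
  have hCnorm : ∀ k : ℕ, ‖A ^ k‖ ≤ C * r ^ k := by
    intro k
    by_cases hkM : k < M
    · have h1 : ‖A ^ k‖ / r ^ k ≤ ∑ k' ∈ Finset.range M, ‖A ^ k'‖ / r ^ k' :=
        Finset.single_le_sum (fun k' _ => div_nonneg (norm_nonneg _) (by positivity))
          (Finset.mem_range.mpr hkM)
      have h2 : ‖A ^ k‖ / r ^ k ≤ C := by rw [hC]; linarith
      calc ‖A ^ k‖ = (‖A ^ k‖ / r ^ k) * r ^ k := by field_simp
        _ ≤ C * r ^ k := by
            apply mul_le_mul_of_nonneg_right h2 (by positivity)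
    · push_neg at hkM
      have hb := hbig k (le_trans (le_max_left _ _) hkM) (le_trans (le_max_right _ _) hkM)
      calc ‖A ^ k‖ ≤ r ^ k := hb
        _ = 1 * r ^ k := (one_mul _).symm
        _ ≤ C * r ^ k := mul_le_mul_of_nonneg_right hC1 (by positivity)
  refine ⟨C, r, hr0, hr1, by linarith, fun k i j => ?_⟩
  have h1 : |(L ^ k) i j| = ‖(A ^ k) i j‖ := by
    rw [map_pow_ofReal, Matrix.map_apply, Complex.norm_real, Real.norm_eq_abs]
  rw [h1]
  exact (hentry _ i j).trans (hCnorm k)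

end Aux

/-- for a graph with self-loops, a matrix `L` with positive
entries exactly on the edges, `ρ(L) < 1`, and the stationary covariance
`S = ω • ∑ (Lᵀ)^k L^k`, one has `S i j = 0` iff `i` and `j` do not belong
to a common maximal class. -/
theorem stmt10 {n : ℕ} (E : Fin n → Fin n → Prop) (L : Matrix (Fin n) (Fin n) ℝ)
    (hloop : ∀ i, E i i)
    (hpos : ∀ i j, E i j → 0 < L i j)
    (hzero : ∀ i j, ¬ E i j → L i j = 0)
    (hρ : specRad L < 1) (ω : ℝ) (hω : 0 < ω) :
    ∀ i j : Fin n,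
      (ω • ∑' k : ℕ, (Lᵀ) ^ k * L ^ k : Matrix (Fin n) (Fin n) ℝ) i j = 0 ↔
        ¬ CommonMaxClass E i j := by
  intro i j
  have : Nonempty (Fin n) := ⟨i⟩
  have hnn : ∀ i j, 0 ≤ L i j := entries_nonneg hpos hzero
  obtain ⟨C, r, hr0, hr1, hC0, hbd⟩ := pow_entry_bound L hρ
  -- the entry formula
  have hF : ∀ (k : ℕ) (a b : Fin n),
      ((Lᵀ ^ k * L ^ k : Matrix (Fin n) (Fin n) ℝ)) a b
        = ∑ l, (L ^ k) l a * (L ^ k) l b := by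
    intro k a b
    rw [Matrix.mul_apply]
    refine Finset.sum_congr rfl fun l _ => ?_
    rw [← Matrix.transpose_pow, Matrix.transpose_apply]
  -- nonnegativity of the entries
  have hFnn : ∀ (k : ℕ) (a b : Fin n),
      0 ≤ ((Lᵀ ^ k * L ^ k : Matrix (Fin n) (Fin n) ℝ)) a b := by
    intro k a b
    rw [hF]
    exact Finset.sum_nonneg fun l _ =>
      mul_nonneg (pow_entries_nonneg hnn k l a) (pow_entries_nonneg hnn k l b)
  -- entrywise summability
  have hsum_entry : ∀ a b : Fin n,
      Summable fun k : ℕ => ((Lᵀ ^ k * L ^ k : Matrix (Fin n) (Fin n) ℝ)) a b := by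
    intro a b
    have hgs : Summable fun k : ℕ => (n * C ^ 2) * (r ^ 2) ^ k :=
      (summable_geometric_of_lt_one (by positivity)
        (by nlinarith)).mul_left _
    refine Summable.of_nonneg_of_le (fun k => hFnn k a b) (fun k => ?_) hgs
    rw [hF]
    have hb : ∀ l : Fin n, (L ^ k) l a * (L ^ k) l b ≤ C ^ 2 * (r ^ 2) ^ k := by
      intro l
      have h1 : (L ^ k) l a ≤ C * r ^ k := (le_abs_self _).trans (hbd k l a)
      have h2 : (L ^ k) l b ≤ C * r ^ k := (le_abs_self _).trans (hbd k l b)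
      calc (L ^ k) l a * (L ^ k) l b ≤ (C * r ^ k) * (C * r ^ k) :=
            mul_le_mul h1 h2 (pow_entries_nonneg hnn k l b) (by positivity)
        _ = C ^ 2 * (r ^ 2) ^ k := by ring
    calc (∑ l, (L ^ k) l a * (L ^ k) l b) ≤ ∑ _l : Fin n, C ^ 2 * (r ^ 2) ^ k :=
          Finset.sum_le_sum fun l _ => hb l
      _ = (n : ℝ) * (C ^ 2 * (r ^ 2) ^ k) := by
          rw [Finset.sum_const, Finset.card_univ, Fintype.card_fin, nsmul_eq_mul]
      _ = (n * C ^ 2) * (r ^ 2) ^ k := by ring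
  -- summability of the matrix series
  have hsum : Summable fun k : ℕ => (Lᵀ ^ k * L ^ k : Matrix (Fin n) (Fin n) ℝ) :=
    Pi.summable.mpr fun a => Pi.summable.mpr fun b => hsum_entry a b
  have hsum_i : Summable fun k : ℕ => (Lᵀ ^ k * L ^ k : Matrix (Fin n) (Fin n) ℝ) i :=
    Pi.summable.mpr fun b => hsum_entry i b
  -- the entry of the tsum
  have hentry : (∑' k : ℕ, (Lᵀ ^ k * L ^ k : Matrix (Fin n) (Fin n) ℝ)) i j
      = ∑' k : ℕ, ((Lᵀ ^ k * L ^ k : Matrix (Fin n) (Fin n) ℝ)) i j := by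
    have h1 := tsum_apply (x := i) hsum
    have h2 := tsum_apply (x := j) hsum_i
    calc (∑' k : ℕ, (Lᵀ ^ k * L ^ k : Matrix (Fin n) (Fin n) ℝ)) i j
        = (∑' k : ℕ, (Lᵀ ^ k * L ^ k : Matrix (Fin n) (Fin n) ℝ) i) j := congrFun h1 j
      _ = ∑' k : ℕ, ((Lᵀ ^ k * L ^ k : Matrix (Fin n) (Fin n) ℝ)) i j := h2
  rw [Matrix.smul_apply, hentry, smul_eq_mul, mul_eq_zero, or_iff_right (ne_of_gt hω)]
  rw [commonMaxClass_iff]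
  constructor
  · -- tsum = 0 → no common ancestor
    intro h0
    rintro ⟨l, h1, h2⟩
    obtain ⟨k1, hk1⟩ := reach_imp_pos hnn hpos h1
    obtain ⟨k2, hk2⟩ := reach_imp_pos hnn hpos h2
    set k := max k1 k2 with hk
    have p1 : 0 < (L ^ k) l i := pos_mono hnn hpos hloop (le_max_left _ _) hk1
    have p2 : 0 < (L ^ k) l j := pos_mono hnn hpos hloop (le_max_right _ _) hk2
    have hpos_term : 0 < ((Lᵀ ^ k * L ^ k : Matrix (Fin n) (Fin n) ℝ)) i j := by
      rw [hF]
      refine Finset.sum_pos' (fun m _ =>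
        mul_nonneg (pow_entries_nonneg hnn k m i) (pow_entries_nonneg hnn k m j)) ?_
      exact ⟨l, Finset.mem_univ l, mul_pos p1 p2⟩
    have hle := Summable.le_tsum (hsum_entry i j) k (fun k' _ => hFnn k' i j)
    linarith [h0 ▸ hle]
  · -- no common ancestor → tsum = 0
    intro h
    have hzero' : ∀ k : ℕ, ((Lᵀ ^ k * L ^ k : Matrix (Fin n) (Fin n) ℝ)) i j = 0 := by
      intro k
      by_contra hne
      have hk : 0 < ((Lᵀ ^ k * L ^ k : Matrix (Fin n) (Fin n) ℝ)) i j :=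
        lt_of_le_of_ne (hFnn k i j) (Ne.symm hne)
      rw [hF] at hk
      have : ∃ l ∈ Finset.univ, (0 : ℝ) < (L ^ k) l i * (L ^ k) l j := by
        apply Finset.exists_lt_of_sum_lt (f := fun _ => (0 : ℝ))
        simpa using hk
      obtain ⟨l, _, hl⟩ := this
      have p1 : 0 < (L ^ k) l i := by
        rcases (pow_entries_nonneg hnn k l i).lt_or_eq with h' | h'
        · exact h'
        · rw [← h'] at hl; simp at hl
      have p2 : 0 < (L ^ k) l j := by
        rcases (pow_entries_nonneg hnn k l j).lt_or_eq with h' | h'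
        · exact h'
        · rw [← h'] at hl; simp at hl
      exact h ⟨l, pos_imp_reach hnn hzero k l i p1, pos_imp_reach hnn hzero k l j p2⟩
    rw [tsum_congr hzero', tsum_zero]
end

section
/- Let G be a finite weakly connected directed graph with self-loops, and define for each node i the set C_i = { j : i and j belong to a common maximal class }. Let 𝔐ℭ be the set of maximal classes of G, 𝔠 = { C_i : i ∈ [n] }, and 𝔠' = { C_i ∈ 𝔠 : ∃ k, l ∈ C_i not belonging to a common maximal class }. Then 𝔐ℭ = 𝔠 \ 𝔠'. -/
/-- In a finite graph, every node is reachable from some source node. -/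
lemma exists_source_reaching {V : Type*} [Finite V] (E : V → V → Prop) (v : V) :
    ∃ s, IsSourceNode E s ∧ Relation.ReflTransGen E s v := by
  classical
  set r : V → V → Prop := fun a b =>
    Relation.ReflTransGen E a b ∧ ¬ Relation.ReflTransGen E b a with hr
  haveI : IsTrans V r := ⟨by
    rintro a b c ⟨hab, hba⟩ ⟨hbc, hcb⟩
    exact ⟨hab.trans hbc, fun h => hba (hbc.trans h)⟩⟩
  haveI : IsIrrefl V r := ⟨fun a h => h.2 Relation.ReflTransGen.refl⟩
  have hwf : WellFounded r := Finite.wellFounded_of_trans_of_irrefl r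
  set S : Set V := {w | Relation.ReflTransGen E w v} with hS
  have hne : S.Nonempty := ⟨v, Relation.ReflTransGen.refl⟩
  refine ⟨hwf.min S hne, ?_, hwf.min_mem S hne⟩
  intro u hu
  by_contra hmu
  exact hwf.not_lt_min S (hu.trans (hwf.min_mem S hne)) ⟨hu, hmu⟩

/-- for a finite weakly connected directed graph with self-loops,
the set of maximal classes equals `𝔠 \ 𝔠'`, where `𝔠` is the collection of
the sets `C_i = {j | i, j share a maximal class}` and `𝔠'` is the
subcollection of those `C_i` containing two nodes not sharing a maximal
class. -/
theorem stmt13 {n : ℕ} (E : Fin n → Fin n → Prop) (hloop : ∀ i, E i i)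
    (hconn : ∀ i j : Fin n, Relation.ReflTransGen (fun a b => E a b ∨ E b a) i j)
    (𝔠 𝔠' : Set (Set (Fin n)))
    (h𝔠 : 𝔠 = { S : Set (Fin n) | ∃ i : Fin n, S = {j | CommonMaxClass E i j} })
    (h𝔠' : 𝔠' = { S : Set (Fin n) |
        S ∈ 𝔠 ∧ ∃ k ∈ S, ∃ l ∈ S, ¬ CommonMaxClass E k l }) :
    maximalClassesOf E = 𝔠 \ 𝔠' := by
  subst h𝔠 h𝔠'
  ext S
  constructor
  · rintro ⟨s, hs, rfl⟩
    have hmem : (∃ i : Fin n, {v | Relation.ReflTransGen E s v}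
        = {j | CommonMaxClass E i j}) := by
      refine ⟨s, ?_⟩
      ext j
      constructor
      · intro hj
        exact ⟨s, hs, Relation.ReflTransGen.refl, hj⟩
      · rintro ⟨t, ht, hts, htj⟩
        exact (hs t hts).trans htj
    refine ⟨hmem, ?_⟩
    rintro ⟨-, k, hk, l, hl, hkl⟩
    exact hkl ⟨s, hs, hk, hl⟩
  · rintro ⟨⟨i, rfl⟩, hnot⟩
    obtain ⟨s, hs, hsi⟩ := exists_source_reaching E i
    refine ⟨s, hs, ?_⟩
    ext j
    constructor
    · rintro ⟨t, ht, hti, htj⟩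
      -- s and j both lie in C_i; if they didn't share a class, C_i ∈ 𝔠'
      have hsCi : CommonMaxClass E i s := ⟨s, hs, hsi, Relation.ReflTransGen.refl⟩
      have hjCi : CommonMaxClass E i j := ⟨t, ht, hti, htj⟩
      by_contra hsj
      have : CommonMaxClass E s j := by
        by_contra h
        exact hnot ⟨⟨i, rfl⟩, s, hsCi, j, hjCi, h⟩
      obtain ⟨u, hu, hus, huj⟩ := this
      exact hsj ((hs u hus).trans huj)
    · intro hj
      exact ⟨s, hs, hsi, hj⟩
end

section
/- Let G be a finite directed graph on n ≥ 2 nodes with self-loops, such that G has at least two distinct maximal classes and there exist nodes k, l belonging to a common maximal class with neither (k,l) nor (l,k) an edge of G. Then there exist three nodes k, a, l such that either (k,a) and (a,l) are edges (excluding self-loops) and neither (k,l) nor (l,k) is an edge, or (a,k) and (a,l) are edges (excluding self-loops) and neither (k,l) nor (l,k) is an edge. -/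
lemma caseA {V : Type*} (E : V → V → Prop) {k l : V}
    (h : Relation.ReflTransGen E k l) : k ≠ l → ¬ E k l → ¬ E l k →
    ∃ k a l : V, k ≠ a ∧ a ≠ l ∧ k ≠ l ∧ ¬ E k l ∧ ¬ E l k ∧
      ((E k a ∧ E a l) ∨ (E a k ∧ E a l)) := by
  induction h with
  | refl => exact fun hne _ _ => absurd rfl hne
  | @tail y l hky hyl ih =>
    intro hne h1 h2
    by_cases hky' : E k y
    · refine ⟨k, y, l, ?_, ?_, hne, h1, h2, Or.inl ⟨hky', hyl⟩⟩
      · rintro rfl; exact h1 hyl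
      · rintro rfl; exact h1 hky'
    · by_cases hyk : E y k
      · refine ⟨k, y, l, ?_, ?_, hne, h1, h2, Or.inr ⟨hyk, hyl⟩⟩
        · rintro rfl; exact h1 hyl
        · rintro rfl; exact h2 hyk
      · have hkyne : k ≠ y := by rintro rfl; exact h1 hyl
        exact ih hkyne hky' hyk

lemma caseB {V : Type*} (E : V → V → Prop) {s l : V}
    (hsl : Relation.ReflTransGen E s l) {k : V} (hsk : Relation.ReflTransGen E s k) :
    k ≠ l → ¬ E k l → ¬ E l k →
    ∃ k a l : V, k ≠ a ∧ a ≠ l ∧ k ≠ l ∧ ¬ E k l ∧ ¬ E l k ∧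
      ((E k a ∧ E a l) ∨ (E a k ∧ E a l)) := by
  induction hsk with
  | refl => exact caseA E hsl
  | @tail y k hsy hyk ih =>
    intro hne h1 h2
    by_cases hyl : E y l
    · refine ⟨k, y, l, ?_, ?_, hne, h1, h2, Or.inr ⟨hyk, hyl⟩⟩
      · rintro rfl; exact h1 hyl
      · rintro rfl; exact h2 hyk
    · by_cases hly : E l y
      · refine ⟨l, y, k, ?_, ?_, hne.symm, h2, h1, Or.inl ⟨hly, hyk⟩⟩
        · rintro rfl; exact h2 hyk
        · rintro rfl; exact h2 hly
      · have hyne : y ≠ l := by rintro rfl; exact h2 hyk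
        exact ih hyne hyl hly

/-- triplet existence: in a finite directed graph on `n ≥ 2`
nodes with self-loops, having at least two distinct maximal classes and a pair
of non-adjacent nodes sharing a maximal class, there exist nodes `k, a, l`
with `k → a → l` or `a → k, a → l` (edges excluding self-loops) and neither
`(k,l)` nor `(l,k)` an edge. -/
theorem stmt14 {n : ℕ} (hn : 2 ≤ n) (E : Fin n → Fin n → Prop)
    (hloop : ∀ i, E i i)
    (htwo : ∃ S₁ S₂ : Set (Fin n),
      S₁ ∈ maximalClassesOf E ∧ S₂ ∈ maximalClassesOf E ∧ S₁ ≠ S₂)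
    (hpair : ∃ k l : Fin n, k ≠ l ∧ CommonMaxClass E k l ∧ ¬ E k l ∧ ¬ E l k) :
    ∃ k a l : Fin n, k ≠ a ∧ a ≠ l ∧ k ≠ l ∧ ¬ E k l ∧ ¬ E l k ∧
      ((E k a ∧ E a l) ∨ (E a k ∧ E a l)) := by
  obtain ⟨k, l, hkl, ⟨s, _, hsk, hsl⟩, h1, h2⟩ := hpair
  exact caseB E hsl hsk hkl h1 h2
end
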